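/- Let t ≥ 1 be an integer, let L ≥ 0 and d_max ≥ 0 be real numbers, and let c_1, …, c_t be real numbers with |c_i| ≤ 2·L·d_max/√i for each 1 ≤ i ≤ t. Then ∑_{i=1}^t α_t^i · |c_i| ≤ 4·L·d_max/√t. -/

import Mathlib

/-!
Writing `S t = ∑_{i ≤ t} α_t^i / √i`, the recursion `α_{t+1}^i = (1 - α_{t+1}) α_t^i` gives
`S (t+1) = (1 - α_{t+1}) S t + α_{t+1} / √(t+1)`, and `S t ≤ 2 / √t` follows by induction:
with `1 - α_{t+1} = t / (H+t+1)` the inductive step reduces to `2 √t √(t+1) ≤ 2t + 1 + H`,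
which is AM-GM. The theorem is then this bound scaled by `2 L d_max`.
-/

/-- The learning rate `α_t = (H+1)/(H+t)`. -/
noncomputable def lrate (H t : ℕ) : ℝ := (H + 1) / (H + t)

/-- The weight `α_t^i = α_i · ∏_{j=i+1}^t (1 − α_j)`. -/
noncomputable def lrateW (H t i : ℕ) : ℝ :=
  lrate H i * ∏ j ∈ Finset.Icc (i + 1) t, (1 - lrate H j)

open Finset

lemma lrate_nonneg (H i : ℕ) : 0 ≤ lrate H i := by
  unfold lrate; positivity

lemma lrate_le_one (H : ℕ) {i : ℕ} (hi : 1 ≤ i) : lrate H i ≤ 1 := by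
  unfold lrate
  rw [div_le_one (by positivity)]
  have : (1 : ℝ) ≤ i := by exact_mod_cast hi
  linarith

lemma one_sub_lrate_succ (H t : ℕ) : 1 - lrate H (t + 1) = t / (H + t + 1) := by
  unfold lrate
  push_cast
  field_simp
  ring

lemma lrateW_nonneg (H t : ℕ) {i : ℕ} (hi : 1 ≤ i) : 0 ≤ lrateW H t i := by
  refine mul_nonneg (lrate_nonneg H i) (prod_nonneg fun j hj => ?_)
  have hj : 1 ≤ j := by have := (mem_Icc.mp hj).1; omega
  linarith [lrate_le_one H hj]

lemma lrateW_self (H t : ℕ) : lrateW H t t = lrate H t := by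
  rw [lrateW, Icc_eq_empty (by omega), prod_empty, mul_one]

lemma lrateW_succ (H t : ℕ) {i : ℕ} (hi : i ≤ t) :
    lrateW H (t + 1) i = (1 - lrate H (t + 1)) * lrateW H t i := by
  rw [lrateW, lrateW, prod_Icc_succ_top (by omega)]
  ring

lemma sum_lrateW_succ (H t : ℕ) (f : ℕ → ℝ) :
    ∑ i ∈ Icc 1 (t + 1), lrateW H (t + 1) i * f i =
      (1 - lrate H (t + 1)) * ∑ i ∈ Icc 1 t, lrateW H t i * f i +
        lrate H (t + 1) * f (t + 1) := by
  rw [sum_Icc_succ_top (by omega), lrateW_self, mul_sum]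
  congr 1
  refine sum_congr rfl fun i hi => ?_
  rw [lrateW_succ H t (mem_Icc.mp hi).2, mul_assoc]

lemma one_sub_lrate_mul_add_lrate_div_sqrt_le (H : ℕ) {t : ℕ} (ht : 1 ≤ t) :
    (1 - lrate H (t + 1)) * (2 / √t) + lrate H (t + 1) / √(t + 1 : ℕ) ≤
      2 / √(t + 1 : ℕ) := by
  set s := √(t : ℝ)
  set u := √(t + 1 : ℕ)
  have hs : 0 < s := Real.sqrt_pos.mpr (by exact_mod_cast ht)
  have hu : 0 < u := Real.sqrt_pos.mpr (by positivity)
  have hs2 : s ^ 2 = t := Real.sq_sqrt (by positivity)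
  have hu2 : u ^ 2 = t + 1 := by rw [Real.sq_sqrt (by positivity)]; push_cast; ring
  have hD : (0 : ℝ) < H + t + 1 := by positivity
  have hα : lrate H (t + 1) = (H + 1) / (H + t + 1) := by
    rw [lrate]; push_cast; ring
  have amgm : 2 * (s * u) ≤ 2 * t + 1 := by nlinarith [sq_nonneg (s - u)]
  rw [one_sub_lrate_succ, hα]
  calc (t : ℝ) / (H + t + 1) * (2 / s) + (H + 1) / (H + t + 1) / u
      = (2 * (s * u) + (H + 1)) / ((H + t + 1) * u) := by
        rw [← hs2]; field_simp
    _ ≤ 2 * (H + t + 1) / ((H + t + 1) * u) := by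
        gcongr; linarith
    _ = 2 / u := by field_simp

lemma sum_lrateW_div_sqrt_le (H : ℕ) {t : ℕ} (ht : 1 ≤ t) :
    ∑ i ∈ Icc 1 t, lrateW H t i * (1 / √i) ≤ 2 / √t := by
  induction t, ht using Nat.le_induction with
  | base =>
    have hH : (H : ℝ) + 1 ≠ 0 := by positivity
    simp only [Icc_self, sum_singleton, lrateW_self, lrate, Nat.cast_one, Real.sqrt_one,
      div_self hH]
    norm_num
  | succ t ht ih =>
    rw [sum_lrateW_succ, mul_one_div]
    calc _ ≤ (1 - lrate H (t + 1)) * (2 / √t) + lrate H (t + 1) / √(t + 1 : ℕ) := by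
          gcongr
          linarith [lrate_le_one H (Nat.le_add_left 1 t)]
      _ ≤ 2 / √(t + 1 : ℕ) := one_sub_lrate_mul_add_lrate_div_sqrt_le H ht

theorem stmt_9_general (H : ℕ) (t : ℕ) (ht : 1 ≤ t)
    (L dmax : ℝ) (hL : 0 ≤ L) (hdmax : 0 ≤ dmax) (c : ℕ → ℝ)
    (hc : ∀ i : ℕ, 1 ≤ i → i ≤ t → |c i| ≤ 2 * L * dmax / Real.sqrt i) :
    ∑ i ∈ Finset.Icc 1 t, lrateW H t i * |c i| ≤ 4 * L * dmax / Real.sqrt t := by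
  calc ∑ i ∈ Icc 1 t, lrateW H t i * |c i|
      ≤ ∑ i ∈ Icc 1 t, lrateW H t i * (2 * L * dmax * (1 / √i)) := by
        refine sum_le_sum fun i hi => ?_
        obtain ⟨h1, h2⟩ := mem_Icc.mp hi
        rw [mul_one_div]
        exact mul_le_mul_of_nonneg_left (hc i h1 h2) (lrateW_nonneg H t h1)
    _ = 2 * L * dmax * ∑ i ∈ Icc 1 t, lrateW H t i * (1 / √i) := by
        rw [mul_sum]; exact sum_congr rfl fun i _ => by ring
    _ ≤ 2 * L * dmax * (2 / √t) := by gcongr; exact sum_lrateW_div_sqrt_le H ht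
    _ = 4 * L * dmax / √t := by ring

theorem stmt_9 (H : ℕ) (hH : 1 ≤ H) (t : ℕ) (ht : 1 ≤ t)
    (L dmax : ℝ) (hL : 0 ≤ L) (hdmax : 0 ≤ dmax) (c : ℕ → ℝ)
    (hc : ∀ i : ℕ, 1 ≤ i → i ≤ t → |c i| ≤ 2 * L * dmax / Real.sqrt i) :
    ∑ i ∈ Finset.Icc 1 t, lrateW H t i * |c i| ≤ 4 * L * dmax / Real.sqrt t :=
  stmt_9_general H t ht L dmax hL hdmax c hc
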